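/- arXiv:0904.0826 — 6 statements merged into one kernel-verified Lean document; each statement's English description precedes it below -/
import Mathlib

section
/- If a and b are relatively prime integers with b > 0 and tan(aπ/b) is rational, then b ∈ {1, 2, 3, 4}. -/
open Complex Polynomial in
theorem stmt2 (a b : ℤ) (hb : 0 < b) (h : IsCoprime a b)
    (hcos : Real.cos (a * Real.pi / b) ≠ 0)
    (hrat : ∃ q : ℚ, Real.tan (a * Real.pi / b) = q) :
    b ∈ ({1, 2, 3, 4} : Set ℤ) := by
  obtain ⟨q, hq⟩ := hrat
  set θ : ℝ := a * Real.pi / b with hθ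
  have hd : (1 + q ^ 2 : ℚ) ≠ 0 := by positivity
  have hcos2 : (1 + Real.tan θ ^ 2)⁻¹ = Real.cos θ ^ 2 := Real.inv_one_add_tan_sq hcos
  have hC : Real.cos (2 * θ) = ((2 * (1 + q ^ 2)⁻¹ - 1 : ℚ) : ℝ) := by
    rw [Real.cos_two_mul, ← hcos2, hq]
    push_cast
    ring
  have hS : Real.sin (2 * θ) = ((2 * q * (1 + q ^ 2)⁻¹ : ℚ) : ℝ) := by
    have htan : Real.sin θ = Real.tan θ * Real.cos θ := by
      rw [Real.tan_eq_sin_div_cos]; field_simp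
    have hsq : Real.cos θ * Real.cos θ = Real.cos θ ^ 2 := by ring
    rw [Real.sin_two_mul, htan, hq, mul_assoc, mul_assoc, hsq, ← hcos2, hq]
    push_cast
    ring
  set C : ℚ := 2 * (1 + q ^ 2)⁻¹ - 1 with hCdef
  set S : ℚ := 2 * q * (1 + q ^ 2)⁻¹ with hSdef
  clear_value C S
  have hπ : Real.pi ≠ 0 := Real.pi_ne_zero
  have hbR' : (b : ℝ) ≠ 0 := by positivity
  -- the root of unity
  set z : ℂ := Complex.exp (2 * θ * Complex.I) with hz
  have hzpow : z ^ b.toNat = 1 := by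
    rw [hz, ← Complex.exp_nat_mul]
    have hreal : ((b.toNat : ℕ) : ℝ) * (2 * θ) = (a : ℝ) * (2 * Real.pi) := by
      have hbn : ((b.toNat : ℕ) : ℝ) = (b : ℝ) := by exact_mod_cast Int.toNat_of_nonneg hb.le
      rw [hbn, hθ]; field_simp
    have harg : ((b.toNat : ℕ) : ℂ) * (2 * (θ : ℂ) * Complex.I)
        = (a : ℂ) * (2 * (Real.pi : ℂ) * Complex.I) := by
      rw [show ((b.toNat : ℕ) : ℂ) * (2 * (θ : ℂ) * Complex.I)
          = ((((b.toNat : ℕ) : ℝ) * (2 * θ) : ℝ) : ℂ) * Complex.I by push_cast; ring, hreal]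
      push_cast; ring
    rw [harg]
    exact_mod_cast Complex.exp_int_mul_two_pi_mul_I a
  have hbt : b.toNat ≠ 0 := by omega
  have key : ∀ w : ℂ, w ^ b.toNat = 1 → IsIntegral ℤ w := fun w hw =>
    ⟨X ^ b.toNat - Polynomial.C 1, Polynomial.monic_X_pow_sub_C 1 hbt, by simp [hw]⟩
  have hzint : IsIntegral ℤ z := key z hzpow
  have hzinv : IsIntegral ℤ z⁻¹ := key z⁻¹ (by rw [inv_pow, hzpow, inv_one])
  have hIint : IsIntegral ℤ Complex.I :=
    ⟨X ^ 2 + Polynomial.C 1, Polynomial.monic_X_pow_add_C 1 (by norm_num), by simp⟩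
  have hzinv_eq : z⁻¹ = Complex.exp (-(2 * (θ : ℂ)) * Complex.I) := by
    rw [hz, ← Complex.exp_neg]; ring_nf
  have hcast2 : (2 * (θ : ℂ)) = (((2 * θ : ℝ)) : ℂ) := by push_cast; ring
  have h2C : ((2 * C : ℚ) : ℂ) = z + z⁻¹ := by
    rw [hzinv_eq, hz, ← Complex.two_cos, hcast2, ← Complex.ofReal_cos, hC]
    push_cast; ring
  have h2S : ((2 * S : ℚ) : ℂ) = (z⁻¹ - z) * Complex.I := by
    rw [hzinv_eq, hz, ← Complex.two_sin, hcast2, ← Complex.ofReal_sin, hS]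
    push_cast; ring
  have hCint : IsIntegral ℤ ((2 * C : ℚ) : ℂ) := h2C ▸ hzint.add hzinv
  have hSint : IsIntegral ℤ ((2 * S : ℚ) : ℂ) := h2S ▸ (hzinv.sub hzint).mul hIint
  -- descend to ℚ
  have descend : ∀ r : ℚ, IsIntegral ℤ ((r : ℚ) : ℂ) → ∃ m : ℤ, (m : ℚ) = r := by
    intro r hr
    have halg : algebraMap ℚ ℂ r = (r : ℂ) := by simp
    have : IsIntegral ℤ r :=
      (isIntegral_algebraMap_iff (algebraMap ℚ ℂ).injective).mp (by rwa [halg])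
    exact IsIntegrallyClosed.isIntegral_iff.mp this
  obtain ⟨m, hm⟩ := descend _ hCint
  obtain ⟨n, hn⟩ := descend _ hSint
  -- m² + n² = 4
  have hsq : (C : ℝ) ^ 2 + (S : ℝ) ^ 2 = 1 := by
    rw [← hC, ← hS]; exact Real.cos_sq_add_sin_sq (2 * θ)
  have hsqQ : C ^ 2 + S ^ 2 = 1 := by exact_mod_cast hsq
  have hmn : m ^ 2 + n ^ 2 = 4 := by
    have : (m : ℚ) ^ 2 + (n : ℚ) ^ 2 = 4 := by rw [hm, hn]; linear_combination 4 * hsqQ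
    exact_mod_cast this
  have hmn0 : m * n = 0 := by
    have h1a : -2 ≤ m := by nlinarith [sq_nonneg n]
    have h1b : m ≤ 2 := by nlinarith [sq_nonneg n]
    have h2a : -2 ≤ n := by nlinarith [sq_nonneg m]
    have h2b : n ≤ 2 := by nlinarith [sq_nonneg m]
    interval_cases m <;> interval_cases n <;> omega
  have hSC : S * C = 0 := by
    have hq0 : (m : ℚ) * n = 0 := by exact_mod_cast hmn0
    rw [hm, hn] at hq0
    linear_combination hq0 / 4
  have hSCR : (S : ℝ) * (C : ℝ) = 0 := by exact_mod_cast hSC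
  -- sin(4θ) = 0
  have hsin4 : Real.sin (4 * θ) = 0 := by
    rw [show (4 : ℝ) * θ = 2 * (2 * θ) by ring, Real.sin_two_mul, hS, hC, mul_assoc, hSCR,
      mul_zero]
  obtain ⟨k, hk⟩ := Real.sin_eq_zero_iff.mp hsin4
  have hkb : k * b = 4 * a := by
    have h2 : ((k * b : ℤ) : ℝ) * Real.pi = ((4 * a : ℤ) : ℝ) * Real.pi := by
      push_cast
      calc (k : ℝ) * b * Real.pi = (k : ℝ) * Real.pi * b := by ring
        _ = (4 * θ) * b := by rw [hk]
        _ = 4 * (a : ℝ) * Real.pi := by rw [hθ]; field_simp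
    exact_mod_cast mul_right_cancel₀ hπ h2
  have hb4 : b ∣ 4 := by
    have : b ∣ 4 * a := ⟨k, by linarith [hkb]⟩
    exact h.symm.dvd_of_dvd_mul_right this
  have hble : b ≤ 4 := Int.le_of_dvd (by norm_num) hb4
  simp only [Set.mem_insert_iff, Set.mem_singleton_iff]
  interval_cases b <;> omega
end

section
/- If a and b are relatively prime integers with b > 0 and cos(aπ/b) is rational, then b ∈ {1, 2, 3, 6}. -/
open Real Complex Polynomial

/-- An element whose n-th power (n > 0) is 1 is integral over ℤ. -/
lemma integral_of_pow_eq_one {ζ : ℂ} {n : ℕ} (hn : 0 < n) (hζ : ζ ^ n = 1) :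
    IsIntegral ℤ ζ := by
  refine ⟨X ^ n - C 1, ?_, ?_⟩
  · exact Polynomial.monic_X_pow_sub_C 1 hn.ne'
  · simp [hζ]

theorem stmt3 (a b : ℤ) (hb : 0 < b) (h : IsCoprime a b)
    (hrat : ∃ q : ℚ, Real.cos (a * Real.pi / b) = q) :
    b ∈ ({1, 2, 3, 6} : Set ℤ) := by
  obtain ⟨q, hq⟩ := hrat
  set θ : ℝ := a * Real.pi / b with hθ
  have hbR : (b : ℝ) ≠ 0 := Int.cast_ne_zero.mpr hb.ne'
  have hbθ : (b : ℝ) * θ = a * Real.pi := by rw [hθ]; field_simp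
  have htn : ((2 * b).toNat : ℤ) = 2 * b := Int.toNat_of_nonneg (by omega)
  have htnR : ((2 * b).toNat : ℝ) = 2 * (b : ℝ) := by exact_mod_cast htn
  have hr : ((2 * b).toNat : ℝ) * θ = a * (2 * Real.pi) := by
    rw [htnR]; nlinarith [hbθ]
  -- exp(±θi) are roots of unity, hence integral over ℤ
  have key : ∀ s : ℝ, s = θ ∨ s = -θ → IsIntegral ℤ (Complex.exp (s * Complex.I)) := by
    intro s hs
    refine integral_of_pow_eq_one (n := (2 * b).toNat) (by omega) ?_
    rw [← Complex.exp_nat_mul]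
    have hc : ((2 * b).toNat : ℂ) * ((s : ℝ) * Complex.I)
        = ((((2 * b).toNat : ℝ) * s : ℝ) : ℂ) * Complex.I := by push_cast; ring
    rcases hs with rfl | rfl
    · rw [hc, hr]
      push_cast
      rw [show ((a : ℂ) * (2 * Real.pi)) * Complex.I = (a : ℂ) * (2 * Real.pi * Complex.I) by ring]
      exact Complex.exp_int_mul_two_pi_mul_I a
    · rw [hc]
      have : ((2 * b).toNat : ℝ) * (-θ) = (-a : ℤ) * (2 * Real.pi) := by push_cast; nlinarith [hr]
      rw [this]
      push_cast
      have h1 := Complex.exp_int_mul_two_pi_mul_I (-a)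
      push_cast at h1 ⊢
      rw [show -(a : ℂ) * (2 * Real.pi) * Complex.I
          = -(a : ℂ) * (2 * Real.pi * Complex.I) by ring]
      exact h1
  -- 2 * cos θ is integral over ℤ
  have hint : IsIntegral ℤ ((2 * q : ℚ) : ℂ) := by
    have h1 := key θ (Or.inl rfl)
    have h2 := key (-θ) (Or.inr rfl)
    have hsum := h1.add h2
    have : ((2 * q : ℚ) : ℂ) = Complex.exp ((θ : ℝ) * Complex.I)
        + Complex.exp (((-θ : ℝ) : ℂ) * Complex.I) := by
      have := Complex.two_cos (x := (θ : ℂ))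
      rw [← Complex.ofReal_cos θ, hq] at this
      push_cast
      push_cast at this
      rw [← this]
    rwa [this]
  have hint' : IsIntegral ℤ (2 * q) := by
    have : ((2 * q : ℚ) : ℂ) = algebraMap ℚ ℂ (2 * q) := by norm_num
    rw [this] at hint
    exact IsIntegral.tower_bot (algebraMap ℚ ℂ).injective hint
  obtain ⟨z, hz⟩ := IsIntegrallyClosed.isIntegral_iff.mp hint'
  -- z = 2 cos θ as a real number, so z ∈ [-2, 2]
  have hzR : (z : ℝ) = 2 * Real.cos θ := by
    have : ((z : ℚ) : ℝ) = ((2 * q : ℚ) : ℝ) := by exact_mod_cast congrArg (Rat.cast : ℚ → ℝ) hz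
    push_cast at this
    rw [this, hq]
  have hb1 : -2 ≤ z := by
    have := Real.neg_one_le_cos θ
    have : (-2 : ℝ) ≤ (z : ℝ) := by nlinarith
    exact_mod_cast this
  have hb2 : z ≤ 2 := by
    have := Real.cos_le_one θ
    have : (z : ℝ) ≤ 2 := by nlinarith
    exact_mod_cast this
  -- In every case, cos (12 θ) = 1
  have h2θ := Real.cos_two_mul θ
  have h4θ := Real.cos_two_mul (2 * θ)
  have h12θ := Real.cos_three_mul (2 * (2 * θ))
  have h12 : Real.cos (12 * θ) = 1 := by
    rw [show (12 : ℝ) * θ = 3 * (2 * (2 * θ)) by ring, h12θ, h4θ, h2θ]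
    interval_cases z <;> push_cast at hzR <;>
      first
      | (rw [show Real.cos θ = -1 by linarith]; norm_num)
      | (rw [show Real.cos θ = -(1/2) by linarith]; norm_num)
      | (rw [show Real.cos θ = 0 by linarith]; norm_num)
      | (rw [show Real.cos θ = 1/2 by linarith]; norm_num)
      | (rw [show Real.cos θ = 1 by linarith]; norm_num)
  -- conclude b ∣ 6
  obtain ⟨n, hn⟩ := (Real.cos_eq_one_iff _).mp h12
  have h2π : (2 * Real.pi) ≠ 0 := by positivity
  have h12b : (n : ℝ) * (2 * Real.pi) * (b : ℝ) = 12 * ((a : ℝ) * Real.pi) := by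
    rw [hn, hθ]; field_simp
  have h2 : ((n : ℝ) * (b : ℝ)) * (2 * Real.pi) = (6 * (a : ℝ)) * (2 * Real.pi) := by
    linear_combination h12b
  have h3 : (n : ℝ) * (b : ℝ) = 6 * (a : ℝ) := mul_right_cancel₀ h2π h2
  have hZ : n * b = 6 * a := by exact_mod_cast h3
  have hdvd : b ∣ 6 * a := ⟨n, by linear_combination -hZ⟩
  have hb6 : b ∣ 6 := (h.symm).dvd_of_dvd_mul_right hdvd
  have : b ≤ 6 := Int.le_of_dvd (by norm_num) hb6
  interval_cases b <;> first | (simp; done) | (norm_num at hb6)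
end

section
/- If a and b are relatively prime integers with b > 0 and sin(aπ/b) is rational, then b ∈ {1, 2, 6}. -/
open Polynomial in
lemma integral_of_pow_eq_one_s4 (z : ℂ) (n : ℕ) (hn : n ≠ 0) (h : z ^ n = 1) :
    IsIntegral ℤ z := by
  refine ⟨X ^ n - C 1, monic_X_pow_sub_C 1 hn, ?_⟩
  simp [h]

theorem stmt4 (a b : ℤ) (hb : 0 < b) (h : IsCoprime a b)
    (hrat : ∃ q : ℚ, Real.sin (a * Real.pi / b) = q) :
    b ∈ ({1, 2, 6} : Set ℤ) := by
  obtain ⟨q, hq⟩ := hrat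
  set x : ℝ := a * Real.pi / b with hx
  have hb0 : (b : ℝ) ≠ 0 := by exact_mod_cast hb.ne'
  have pi_ne : Real.pi ≠ 0 := Real.pi_ne_zero
  have hxb : x * b = a * Real.pi := by rw [hx]; field_simp
  -- exp(±x*I) are roots of unity
  have htn : ((2 * b).toNat : ℤ) = 2 * b := Int.toNat_of_nonneg (by omega)
  have hbnat : (2 * b).toNat ≠ 0 := by omega
  have key : ∀ s : ℝ, (∃ c : ℤ, s * b = c * Real.pi) →
      Complex.exp (s * Complex.I) ^ (2 * b).toNat = 1 := by
    rintro s ⟨c, hc⟩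
    rw [← Complex.exp_nat_mul]
    have h1 : ((2 * b).toNat : ℂ) = 2 * (b : ℂ) := by
      exact_mod_cast congrArg (fun t : ℤ => (t : ℂ)) htn
    have hc' : (s : ℂ) * b = c * Real.pi := by exact_mod_cast congrArg (Complex.ofReal) hc
    have : ((2 * b).toNat : ℂ) * (s * Complex.I) = c * (2 * Real.pi * Complex.I) := by
      rw [h1]; linear_combination (2 * Complex.I) * hc'
    rw [this, Complex.exp_int_mul_two_pi_mul_I]
  have hu : IsIntegral ℤ (Complex.exp (x * Complex.I)) :=
    integral_of_pow_eq_one_s4 _ _ hbnat (key x ⟨a, hxb⟩)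
  have hv : IsIntegral ℤ (Complex.exp (-x * Complex.I)) := by
    have := key (-x) ⟨-a, by push_cast; linear_combination -hxb⟩
    rw [Complex.ofReal_neg] at this
    exact integral_of_pow_eq_one_s4 _ _ hbnat this
  have hI : IsIntegral ℤ Complex.I :=
    integral_of_pow_eq_one_s4 _ 4 (by norm_num) (by simp [pow_succ, Complex.I_mul_I])
  -- 2 sin x = (exp(-xI) - exp(xI)) * I is integral
  have h2s : IsIntegral ℤ ((2 * q : ℚ) : ℂ) := by
    have hsc : ((Real.sin x : ℝ) : ℂ) = Complex.sin x := Complex.ofReal_sin x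
    rw [hq, Complex.sin] at hsc
    have hsin : ((2 * q : ℚ) : ℂ) =
        Complex.exp (-x * Complex.I) * Complex.I - Complex.exp (x * Complex.I) * Complex.I := by
      push_cast
      push_cast at hsc
      linear_combination 2 * hsc
    rw [hsin]
    exact (hv.mul hI).sub (hu.mul hI)
  have h2q : IsIntegral ℤ (2 * q) := by
    refine (isIntegral_algebraMap_iff (R := ℤ) (A := ℚ) (B := ℂ)
      (algebraMap ℚ ℂ).injective).mp ?_
    rwa [show (algebraMap ℚ ℂ) (2 * q) = ((2 * q : ℚ) : ℂ) from eq_ratCast _ _]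
  obtain ⟨m, hm⟩ := IsIntegrallyClosed.isIntegral_iff.mp h2q
  have hmr : (m : ℝ) = 2 * q := by exact_mod_cast congrArg (Rat.cast (K := ℝ)) hm
  have hsin2 : Real.sin x = m / 2 := by rw [hq]; rw [hmr]; ring
  have hmb : m = -2 ∨ m = -1 ∨ m = 0 ∨ m = 1 ∨ m = 2 := by
    have h1 := Real.sin_le_one x
    have h2 := Real.neg_one_le_sin x
    rw [hsin2] at h1 h2
    have hle : (m : ℝ) ≤ 2 := by linarith
    have hge : (-2 : ℝ) ≤ m := by linarith
    have hle' : m ≤ 2 := by exact_mod_cast hle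
    have hge' : (-2 : ℤ) ≤ m := by exact_mod_cast hge
    omega
  -- main case analysis
  have cos_case : Real.cos x = 0 → b ∈ ({1, 2, 6} : Set ℤ) := by
    intro hc
    obtain ⟨k, hk⟩ := Real.cos_eq_zero_iff.mp hc
    rw [hk] at hxb
    have h2 : ((2 * a : ℤ) : ℝ) * Real.pi = (((2 * k + 1) * b : ℤ) : ℝ) * Real.pi := by
      push_cast; linear_combination -2 * hxb
    have hz : (2 * a : ℤ) = (2 * k + 1) * b := by
      exact_mod_cast mul_right_cancel₀ pi_ne h2
    have hdvd : b ∣ 2 := h.symm.dvd_of_dvd_mul_right ⟨2 * k + 1, by linarith⟩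
    have := Int.le_of_dvd (by norm_num) hdvd
    simp only [Set.mem_insert_iff, Set.mem_singleton_iff]
    omega
  have half_case : Real.sin x ^ 2 = 1 / 4 → b ∈ ({1, 2, 6} : Set ℤ) := by
    intro hsq
    have hc2 : Real.cos (2 * x) = 1 / 2 := by
      rw [Real.cos_two_mul']
      nlinarith [Real.sin_sq_add_cos_sq x]
    have hc6 : Real.cos (6 * x) = -1 := by
      have h3 := Real.cos_three_mul (2 * x)
      rw [hc2] at h3
      rw [show (6 : ℝ) * x = 3 * (2 * x) by ring, h3]; norm_num
    have h1 : Real.cos (6 * x + Real.pi) = 1 := by rw [Real.cos_add_pi, hc6]; norm_num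
    obtain ⟨n, hn⟩ := (Real.cos_eq_one_iff _).mp h1
    have h2 : ((2 * n * b : ℤ) : ℝ) * Real.pi = (((6 * a + b : ℤ)) : ℝ) * Real.pi := by
      push_cast; linear_combination (b : ℝ) * hn + 6 * hxb
    have hz : (2 * n * b : ℤ) = 6 * a + b := by
      exact_mod_cast mul_right_cancel₀ pi_ne h2
    have hdvd : b ∣ 6 := h.symm.dvd_of_dvd_mul_right ⟨2 * n - 1, by linarith⟩
    have := Int.le_of_dvd (by norm_num) hdvd
    simp only [Set.mem_insert_iff, Set.mem_singleton_iff]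
    interval_cases b <;> omega
  rcases hmb with hm' | hm' | hm' | hm' | hm'
  · refine cos_case (sq_eq_zero_iff.mp ?_)
    have := Real.sin_sq_add_cos_sq x
    rw [hsin2, hm'] at this; push_cast at this; linarith
  · refine half_case ?_
    rw [hsin2, hm']; norm_num
  · -- sin = 0
    have hs : Real.sin x = 0 := by rw [hsin2, hm']; norm_num
    obtain ⟨n, hn⟩ := Real.sin_eq_zero_iff.mp hs
    have h2 : ((n * b : ℤ) : ℝ) * Real.pi = ((a : ℤ) : ℝ) * Real.pi := by
      push_cast; linear_combination (b : ℝ) * hn + hxb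
    have hz : (n * b : ℤ) = a := by exact_mod_cast mul_right_cancel₀ pi_ne h2
    have hu : IsUnit b := h.isUnit_of_dvd' ⟨n, by linarith⟩ dvd_rfl
    have := Int.isUnit_iff.mp hu
    simp only [Set.mem_insert_iff, Set.mem_singleton_iff]
    omega
  · refine half_case ?_
    rw [hsin2, hm']; norm_num
  · refine cos_case (sq_eq_zero_iff.mp ?_)
    have := Real.sin_sq_add_cos_sq x
    rw [hsin2, hm'] at this; push_cast at this; linarith
end

section
/- If θ is a rational multiple of π and cos(θ) is rational, then cos(θ) ∈ {0, ±1/2, ±1}. -/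
open Complex in
lemma aux_integral (θ : ℝ) (n : ℕ) (hn : n ≠ 0)
    (h : Complex.exp (θ * I) ^ n = 1) : IsIntegral ℤ (2 * Complex.cos θ) := by
  have hζ : IsIntegral ℤ (Complex.exp (θ * I)) :=
    ⟨Polynomial.X ^ n - 1, by
      simpa using Polynomial.monic_X_pow_sub_C (1 : ℤ) hn, by simp [h]⟩
  have hζ' : IsIntegral ℤ (Complex.exp (-θ * I)) :=
    ⟨Polynomial.X ^ n - 1, by
      simpa using Polynomial.monic_X_pow_sub_C (1 : ℤ) hn, by
        simp [← Complex.exp_nat_mul]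
        rw [Complex.exp_neg, Complex.exp_nat_mul, h, inv_one, sub_self]⟩
  have h2 : 2 * Complex.cos θ = Complex.exp (θ * I) + Complex.exp (-θ * I) := by
    rw [Complex.cos]
    rw [show (θ:ℂ) * I = I * θ by ring, show -(θ:ℂ) * I = I * -θ by ring]
    ring
  rw [h2]
  exact hζ.add hζ'

theorem stmt5 (θ : ℝ) (a b : ℤ) (hb : b ≠ 0) (hθ : θ = (a / b : ℝ) * Real.pi)
    (hrat : ∃ q : ℚ, Real.cos θ = q) :
    Real.cos θ ∈ ({0, 1/2, -(1/2), 1, -1} : Set ℝ) := by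
  obtain ⟨q, hq⟩ := hrat
  have hbR : (b : ℝ) ≠ 0 := Int.cast_ne_zero.mpr hb
  have hbθ : (b : ℝ) * θ = a * Real.pi := by
    rw [hθ]; field_simp
  have habs : (b.natAbs : ℝ) * θ = (b.sign * a : ℤ) * Real.pi := by
    have hsZ : b.sign * b = (b.natAbs : ℤ) := by
      rcases lt_trichotomy b 0 with h | h | h
      · rw [Int.sign_eq_neg_one_of_neg h, Int.ofNat_natAbs_of_nonpos h.le]; ring
      · exact absurd h hb
      · rw [Int.sign_eq_one_of_pos h, Int.natAbs_of_nonneg h.le]; ring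
    have hs : ((b.sign : ℝ)) * b = (b.natAbs : ℝ) := by
      have := congrArg (fun z : ℤ => (z : ℝ)) hsZ
      push_cast at this
      rw [Nat.cast_natAbs]
      rw [Int.cast_abs]
      exact this
    push_cast
    rw [← hs]
    rw [mul_assoc, hbθ]; ring
  set n : ℕ := 2 * b.natAbs with hn
  have hne : n ≠ 0 := by simp [hn, Int.natAbs_ne_zero.mpr hb]
  have hpow : Complex.exp (θ * Complex.I) ^ n = 1 := by
    rw [← Complex.exp_nat_mul]
    rw [show ((n : ℂ)) * (θ * Complex.I) = ((b.sign * a : ℤ) : ℂ) * (2 * Real.pi * Complex.I) by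
      push_cast [hn]
      rw [show ((2:ℂ) * b.natAbs * (θ * Complex.I)) = 2 * (((b.natAbs : ℝ) * θ : ℝ) : ℂ) * Complex.I by push_cast; ring, habs]
      push_cast; ring]
    exact Complex.exp_int_mul_two_pi_mul_I _
  have hint := aux_integral θ n hne hpow
  have hcos : (2 * Complex.cos θ) = ((2 * q : ℚ) : ℂ) := by
    rw [← Complex.ofReal_cos, hq]; push_cast; ring
  rw [hcos] at hint
  have hint' : IsIntegral ℤ (2 * q : ℚ) := by
    have h : IsIntegral ℤ (algebraMap ℚ ℂ (2 * q)) := by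
      simpa [Rat.cast_mul] using hint
    exact (isIntegral_algebraMap_iff (algebraMap ℚ ℂ).injective).mp h
  obtain ⟨m, hm⟩ := IsIntegrallyClosed.isIntegral_iff.mp hint'
  have hm' : (m : ℚ) = 2 * q := by simpa using hm
  have hle : |Real.cos θ| ≤ 1 := Real.abs_cos_le_one θ
  have hqle : |q| ≤ 1 := by
    have : |(q : ℝ)| ≤ 1 := hq ▸ hle
    exact_mod_cast this
  have hmle : |m| ≤ 2 := by
    have : |(m : ℚ)| ≤ 2 := by
      rw [hm', abs_mul, abs_two]
      nlinarith [abs_nonneg q]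
    exact_mod_cast this
  have hqval : Real.cos θ = (m : ℝ) / 2 := by
    rw [hq]
    have h2 : q = (m : ℚ) / 2 := by linarith [hm']
    rw [h2]; push_cast; ring
  rw [hqval]
  rw [abs_le] at hmle
  obtain ⟨h1, h2⟩ := hmle
  interval_cases m <;> norm_num [Set.mem_insert_iff]
end

section
/- If θ is a rational multiple of π and sin(θ) is rational, then sin(θ) ∈ {0, ±1/2, ±1}. -/
lemma int_of_pow_eq_one {z : ℂ} {n : ℕ} (hn : n ≠ 0) (h : z ^ n = 1) : IsIntegral ℤ z := by
  refine ⟨Polynomial.X ^ n - Polynomial.C 1, Polynomial.monic_X_pow_sub_C 1 hn, ?_⟩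
  simp [h]

theorem stmt6 (θ : ℝ) (a b : ℤ) (hb : b ≠ 0) (hθ : θ = (a / b : ℝ) * Real.pi)
    (hrat : ∃ q : ℚ, Real.sin θ = q) :
    Real.sin θ ∈ ({0, 1/2, -(1/2), 1, -1} : Set ℝ) := by
  obtain ⟨q, hq⟩ := hrat
  set ζ : ℂ := Complex.exp (θ * Complex.I) with hζ
  have hbR : (b : ℝ) ≠ 0 := Int.cast_ne_zero.mpr hb
  set m0 : ℤ := if 0 < b then a else -a with hm0
  have hreal : (2 * b.natAbs : ℝ) * θ = (m0 : ℝ) * (2 * Real.pi) := by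
    rcases lt_or_gt_of_ne hb with hlt | hgt
    · have h1 : (b.natAbs : ℝ) = -b := by
        rw [Nat.cast_natAbs]; push_cast; rw [abs_of_neg (by exact_mod_cast hlt)]
      rw [hm0, if_neg (by omega)]
      push_cast [hθ, h1]
      field_simp
    · have h1 : (b.natAbs : ℝ) = b := by
        rw [Nat.cast_natAbs]; push_cast; rw [abs_of_pos (by exact_mod_cast hgt)]
      rw [hm0, if_pos hgt]
      push_cast [hθ, h1]
      field_simp
  have hroot : ζ ^ (2 * b.natAbs) = 1 := by
    rw [hζ, ← Complex.exp_nat_mul]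
    have : (↑(2 * b.natAbs) : ℂ) * (θ * Complex.I) = (m0 : ℂ) * (2 * Real.pi * Complex.I) := by
      have := congrArg (fun x : ℝ => (x : ℂ) * Complex.I) hreal
      push_cast at this ⊢
      linear_combination this
    rw [this, Complex.exp_int_mul_two_pi_mul_I]
  have hζint : IsIntegral ℤ ζ := int_of_pow_eq_one (by positivity) hroot
  have hζinv : IsIntegral ℤ ζ⁻¹ := by
    have : ζ⁻¹ = ζ ^ (2 * b.natAbs - 1) := by
      have hne : ζ ≠ 0 := Complex.exp_ne_zero _
      field_simp
      rw [← pow_succ']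
      have h2 : 2 * b.natAbs - 1 + 1 = 2 * b.natAbs := by omega
      rw [h2, hroot]
    rw [this]
    exact hζint.pow _
  have hsin : ((2 * Real.sin θ : ℝ) : ℂ) = (ζ⁻¹ - ζ) * Complex.I := by
    push_cast [Complex.ofReal_sin]
    rw [Complex.sin, hζ, ← Complex.exp_neg]
    ring
  have hint : IsIntegral ℤ ((2 * Real.sin θ : ℝ) : ℂ) := by
    rw [hsin]
    exact (hζinv.sub hζint).mul Complex.isIntegral_int_I
  have hq2 : ((2 * q : ℚ) : ℂ) = ((2 * Real.sin θ : ℝ) : ℂ) := by push_cast [hq]; ring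
  have hintq : IsIntegral ℤ (2 * q : ℚ) := by
    rw [show ((2*q : ℚ) : ℂ) = algebraMap ℚ ℂ (2*q) from rfl] at hq2
    have := hq2 ▸ hint
    exact (isIntegral_algebraMap_iff (algebraMap ℚ ℂ).injective).mp this
  obtain ⟨m, hm⟩ := IsIntegrallyClosed.isIntegral_iff.mp hintq
  have hmq : (m : ℝ) = 2 * (q : ℝ) := by
    have : (m : ℚ) = 2 * q := hm
    exact_mod_cast this
  have hqb : |(q : ℝ)| ≤ 1 := hq ▸ Real.abs_sin_le_one θ
  have hmb : |m| ≤ 2 := by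
    have h3 : |(m : ℝ)| ≤ 2 := by
      rw [hmq, abs_mul, abs_of_pos (by norm_num : (0:ℝ) < 2)]
      nlinarith [abs_nonneg (q:ℝ)]
    exact_mod_cast (by exact_mod_cast h3 : |(m:ℤ)| ≤ (2:ℤ))
  have hsinval : Real.sin θ = (m : ℝ) / 2 := by rw [hq, hmq]; ring
  rw [hsinval]
  have hmb2 := abs_le.mp hmb
  have : m = -2 ∨ m = -1 ∨ m = 0 ∨ m = 1 ∨ m = 2 := by omega
  rcases this with h | h | h | h | h <;> subst h <;> norm_num [Set.mem_insert_iff]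
end

section
/- If θ is a rational multiple of π with cos(θ) ≠ 0 and tan(θ) is rational, then tan(θ) ∈ {0, 1, −1}. -/
open Complex in
lemma aux_integral_s7 (θ : ℝ) (a b : ℤ) (hb : b ≠ 0) (hθ : θ = (a / b : ℝ) * Real.pi) :
    IsIntegral ℤ ((2 * Real.cos (2 * θ) : ℝ) : ℂ) := by
  set m : ℕ := b.natAbs with hm
  have hm0 : m ≠ 0 := Int.natAbs_ne_zero.2 hb
  set z : ℂ := Complex.exp (θ * I) with hz
  set w : ℂ := z ^ 2 with hw
  have hbR : (b : ℝ) ≠ 0 := Int.cast_ne_zero.2 hb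
  obtain ⟨k, hk⟩ : ∃ k : ℤ, (m : ℝ) * (a / (b:ℝ)) = k := by
    rcases Int.natAbs_eq b with h | h
    · refine ⟨a, ?_⟩
      have hmb : (m:ℝ) = (b:ℝ) := by
        have h2 : (m:ℤ) = b := by omega
        exact_mod_cast h2
      rw [hmb, mul_comm, div_mul_cancel₀ _ hbR]
    · refine ⟨-a, ?_⟩
      have hmb : (m:ℝ) = -(b:ℝ) := by
        have h2 : (m:ℤ) = -b := by omega
        exact_mod_cast h2
      rw [hmb, neg_mul, mul_comm, div_mul_cancel₀ _ hbR]; push_cast; ring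
  have hwm : w ^ m = 1 := by
    rw [hw, ← pow_mul, hz, ← Complex.exp_nat_mul]
    have hk2 : ((2 * m : ℕ) : ℂ) * (θ * I) = (k : ℂ) * (2 * Real.pi * I) := by
      rw [hθ]
      have : ((m:ℝ) * ((a:ℝ)/(b:ℝ)) : ℂ) = (k:ℂ) := by exact_mod_cast congrArg (Complex.ofReal) hk
      push_cast at this ⊢
      rw [show ((2*m : ℂ)) * ((a/b) * Real.pi * I) = ((m:ℂ) * ((a:ℂ)/(b:ℂ))) * (2 * Real.pi * I) by ring, this]
    rw [hk2, Complex.exp_int_mul_two_pi_mul_I]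
  have hwint : IsIntegral ℤ w := by
    refine ⟨Polynomial.X ^ m - 1, ?_, ?_⟩
    · exact Polynomial.monic_X_pow_sub_C (1 : ℤ) hm0
    · simp [hwm]
  have hmul : w * w ^ (m - 1) = 1 := by
    rw [← pow_succ', Nat.sub_add_cancel (Nat.one_le_iff_ne_zero.2 hm0), hwm]
  have hwinv : IsIntegral ℤ w⁻¹ := by
    rw [inv_eq_of_mul_eq_one_right hmul]
    exact hwint.pow _
  have h1 : w = Complex.exp ((2*θ : ℝ) * I) := by
    rw [hw, hz, ← Complex.exp_nat_mul]; push_cast; ring_nf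
  have h2 : w⁻¹ = Complex.exp (-((2*θ : ℝ)) * I) := by
    rw [h1, ← Complex.exp_neg]; ring_nf
  have key : ((2 * Real.cos (2 * θ) : ℝ) : ℂ) = w + w⁻¹ := by
    rw [h2, h1, ← Complex.two_cos]
    push_cast [Complex.ofReal_cos]
    ring
  rw [key]; exact hwint.add hwinv

theorem stmt7 (θ : ℝ) (a b : ℤ) (hb : b ≠ 0) (hθ : θ = (a / b : ℝ) * Real.pi)
    (hcos : Real.cos θ ≠ 0)
    (hrat : ∃ q : ℚ, Real.tan θ = q) :
    Real.tan θ ∈ ({0, 1, -1} : Set ℝ) := by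
  obtain ⟨q, hq⟩ := hrat
  set r : ℚ := (2 - 2*q^2)/(1+q^2) with hr
  have hq2 : (0:ℚ) < 1 + q^2 := by positivity
  have hrcast : (r : ℝ) = 2 * Real.cos (2*θ) := by
    have hc2 : (1 + Real.tan θ ^ 2)⁻¹ = Real.cos θ ^ 2 := Real.inv_one_add_tan_sq hcos
    rw [Real.cos_two_mul, ← hc2, hq, hr]
    have h0 : (0:ℝ) < 1 + (q:ℝ)^2 := by positivity
    push_cast
    field_simp
    ring
  have hint : IsIntegral ℤ ((r : ℝ) : ℂ) := by
    rw [hrcast]; exact aux_integral_s7 θ a b hb hθ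
  have hint' : IsIntegral ℤ r := by
    rw [show ((r:ℝ):ℂ) = algebraMap ℚ ℂ r by rw [eq_ratCast]; norm_cast] at hint
    exact (isIntegral_algebraMap_iff (algebraMap ℚ ℂ).injective).1 hint
  obtain ⟨n, hn⟩ := IsIntegrallyClosed.isIntegral_iff.1 hint'
  have hnr : (n : ℚ) = r := by exact_mod_cast hn
  -- bounds on n
  have hub : (n : ℚ) ≤ 2 := by
    rw [hnr, hr, div_le_iff₀ hq2]; nlinarith [sq_nonneg q]
  have hlb : (-2 : ℚ) < (n : ℚ) := by
    rw [hnr, hr, lt_div_iff₀ hq2]; nlinarith [sq_nonneg q]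
  have hub' : n ≤ 2 := by exact_mod_cast hub
  have hlb' : -2 < n := by exact_mod_cast hlb
  -- from n = r we get q^2 * (n + 2) = 2 - n
  have hkey : q^2 * ((n:ℚ) + 2) = 2 - (n:ℚ) := by
    have := hnr
    rw [hr, eq_div_iff hq2.ne'] at this
    linarith [this]
  have nosq3 : ∀ p : ℚ, p^2 ≠ 3 := by
    intro p hp
    have hsq : IsSquare ((3:ℕ):ℚ) := ⟨p, by push_cast; rw [← hp]; ring⟩
    rw [Rat.isSquare_natCast_iff] at hsq
    obtain ⟨s, hs⟩ := hsq
    have : s ≤ 3 := by nlinarith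
    interval_cases s <;> omega
  interval_cases n <;> push_cast at hkey
  · -- n = -1 : q^2 = 3
    exact absurd (by linarith : q^2 = 3) (nosq3 q)
  · -- n = 0 : q^2 = 1
    have h1 : q^2 = 1 := by linarith
    have h2 : (q - 1) * (q + 1) = 0 := by nlinarith
    rcases mul_eq_zero.1 h2 with h | h
    · have hq1 : q = 1 := by linarith
      right; left; rw [hq, hq1]; norm_num
    · have hq1 : q = -1 := by linarith
      right; right; rw [hq, hq1]; norm_num
  · -- n = 1 : q^2 = 1/3
    exfalso
    have h13 : q^2 = 1/3 := by linarith
    have hq0 : q ≠ 0 := by intro h; rw [h] at h13; norm_num at h13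
    refine nosq3 q⁻¹ ?_
    rw [← one_div, div_pow, h13]; norm_num
  · -- n = 2 : q = 0
    have h0 : q^2 = 0 := by linarith
    have hq0 : q = 0 := by nlinarith [sq_nonneg q]
    left; rw [hq, hq0]; norm_num
end
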